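/- arXiv:1907.13166 — 2 statements merged into one kernel-verified Lean document; each statement's English description precedes it below -/
import Mathlib

section
/- Let K be a field and f(X) ∈ K[X] an irreducible polynomial of degree d ≥ 3. Then there exists a polynomial h(X) ∈ K[X] of degree at most d−1 such that f(h(X)) is reducible over K. -/
open Polynomial IntermediateField

/-- If `α` has minimal polynomial of degree `d ≥ 3`, then any polynomial of degree at most 2
vanishing at `α` is zero. -/
private lemma aux_small_deg {K L : Type*} [Field K] [Field L] [Algebra K L]
    {α : L} {d : ℕ} (hd3 : 3 ≤ d) (hmin : (minpoly K α).natDegree = d)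
    {P : Polynomial K} (hP : P.natDegree ≤ 2) (h0 : Polynomial.aeval α P = 0) : P = 0 := by
  by_contra hne
  have hdeg := minpoly.degree_le_of_ne_zero K α hne h0
  have := Polynomial.natDegree_le_natDegree hdeg
  omega

private lemma aux_geom {q : ℕ} (hq : 2 ≤ q) (n : ℕ) : ∑ i ∈ Finset.range n, q ^ i < q ^ n := by
  induction n with
  | zero => simp
  | succ n ih =>
    rw [Finset.sum_range_succ, pow_succ]
    have : q ^ n * 2 ≤ q ^ n * q := Nat.mul_le_mul_left _ hq
    omega

/-- Main construction: given a generator `γ` of `L/K` such that `α` is not in the span of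
`{1, γ}`, the polynomial `p` expressing `α` in terms of `γ` makes `f.comp p` reducible. -/
private lemma aux_construct {K L : Type*} [Field K] [Field L] [Algebra K L]
    [FiniteDimensional K L] {f : Polynomial K} {d : ℕ} (hd3 : 3 ≤ d)
    (hdL : Module.finrank K L = d) (hfd : f.natDegree = d)
    {α γ : L} (hα : Polynomial.aeval α f = 0)
    (hγ : K⟮γ⟯ = ⊤)
    (hspan : α ∉ Submodule.span K ({1, γ} : Set L)) :
    ∃ h : Polynomial K, h.natDegree ≤ d - 1 ∧
      ¬ IsUnit (f.comp h) ∧ ¬ Irreducible (f.comp h) := by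
  have hint : IsIntegral K γ := IsIntegral.of_finite K γ
  let pb : PowerBasis K K⟮γ⟯ := IntermediateField.adjoin.powerBasis hint
  let e : K⟮γ⟯ ≃ₐ[K] L := (IntermediateField.equivOfEq hγ).trans IntermediateField.topEquiv
  let pb' : PowerBasis K L := pb.map e
  have hgen : pb'.gen = γ := rfl
  have hdim : pb'.dim = d := by
    have h1 := pb'.finrank
    rw [hdL] at h1
    omega
  obtain ⟨p, hpd, hpe⟩ := pb'.exists_eq_aeval α
  rw [hgen] at hpe
  rw [hdim] at hpd
  have hp2 : 2 ≤ p.natDegree := by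
    by_contra hlt
    push_neg at hlt
    have hle : p.natDegree ≤ 1 := by omega
    have hform := Polynomial.eq_X_add_C_of_natDegree_le_one hle
    apply hspan
    rw [Submodule.mem_span_pair]
    refine ⟨p.coeff 0, p.coeff 1, ?_⟩
    rw [hpe, hform]
    simp [Algebra.smul_def]
    ring
  have hmγ : (minpoly K γ).natDegree = d := by
    have h1 := IntermediateField.adjoin.finrank hint
    have h2 : Module.finrank K K⟮γ⟯ = d := by
      rw [hγ, IntermediateField.finrank_top', hdL]
    omega
  have hdvd : minpoly K γ ∣ f.comp p := by
    apply minpoly.dvd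
    rw [Polynomial.aeval_comp, ← hpe, hα]
  have hcompdeg : (f.comp p).natDegree = d * p.natDegree := by
    rw [Polynomial.natDegree_comp, hfd]
  have hdd : d * 2 ≤ d * p.natDegree := Nat.mul_le_mul_left _ hp2
  obtain ⟨t, ht⟩ := hdvd
  have hm0 : minpoly K γ ≠ 0 := minpoly.ne_zero hint
  have hfp0 : f.comp p ≠ 0 := by
    intro h
    rw [h, Polynomial.natDegree_zero] at hcompdeg
    omega
  have ht0 : t ≠ 0 := by
    rintro rfl
    rw [mul_zero] at ht
    exact hfp0 ht
  have htdeg : t.natDegree = d * p.natDegree - d := by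
    have hh := Polynomial.natDegree_mul hm0 ht0
    rw [← ht] at hh
    omega
  refine ⟨p, by omega, ?_, ?_⟩
  · apply Polynomial.not_isUnit_of_natDegree_pos
    omega
  · intro hirr
    rcases hirr.isUnit_or_isUnit ht with hu | hu
    · exact Polynomial.not_isUnit_of_natDegree_pos _ (by omega) hu
    · exact Polynomial.not_isUnit_of_natDegree_pos _ (by omega) hu

theorem stmt0 (K : Type*) [Field K] (f : Polynomial K) (d : ℕ)
    (hf : Irreducible f) (hd : f.natDegree = d) (hd3 : 3 ≤ d) :
    ∃ h : Polynomial K, h.natDegree ≤ d - 1 ∧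
      ¬ IsUnit (f.comp h) ∧ ¬ Irreducible (f.comp h) := by
  classical
  haveI : Fact (Irreducible f) := ⟨hf⟩
  have hf0 : f ≠ 0 := hf.ne_zero
  let L := AdjoinRoot f
  let pbL : PowerBasis K L := AdjoinRoot.powerBasis hf0
  haveI : FiniteDimensional K L := pbL.finite
  have hrank : Module.finrank K L = d := by
    have h1 := pbL.finrank
    have h2 : pbL.dim = d := by
      rw [show pbL.dim = f.natDegree from rfl, hd]
    omega
  set α : L := AdjoinRoot.root f with hαdef
  have hα : Polynomial.aeval α f = 0 := by
    rw [Polynomial.aeval_def, AdjoinRoot.algebraMap_eq]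
    exact AdjoinRoot.eval₂_root f
  have hminα : (minpoly K α).natDegree = d := by
    rw [AdjoinRoot.minpoly_root hf0,
      Polynomial.natDegree_mul_C (inv_ne_zero (Polynomial.leadingCoeff_ne_zero.mpr hf0)), hd]
  have htopα : K⟮α⟯ = ⊤ := by
    rw [eq_top_iff]
    intro x _
    have hx : x ∈ Algebra.adjoin K ({α} : Set L) := by
      rw [AdjoinRoot.adjoinRoot_eq_top]; trivial
    exact IntermediateField.algebra_adjoin_le_adjoin K _ hx
  obtain ⟨γ, hγtop, hspan⟩ :
      ∃ γ : L, K⟮γ⟯ = ⊤ ∧ α ∉ Submodule.span K ({1, γ} : Set L) := by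
    cases finite_or_infinite K with
    | inr hinf =>
      -- infinite base field: pigeonhole on intermediate fields
      haveI : Finite (IntermediateField K L) :=
        Field.finite_intermediateField_of_exists_primitive_element K L ⟨α, htopα⟩
      obtain ⟨c, c', hne, hcc⟩ := Finite.exists_ne_map_eq_of_infinite
        (fun c : K => K⟮α ^ 2 + algebraMap K L c * α⟯)
      set M := K⟮α ^ 2 + algebraMap K L c * α⟯ with hMdef
      have hγmem : α ^ 2 + algebraMap K L c * α ∈ M := mem_adjoin_simple_self K _
      have hγ'mem : α ^ 2 + algebraMap K L c' * α ∈ M := by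
        rw [hcc]; exact mem_adjoin_simple_self K _
      have hdiff : algebraMap K L (c - c') * α ∈ M := by
        have hsub := M.sub_mem hγmem hγ'mem
        convert hsub using 1
        rw [map_sub]; ring
      have hαM : α ∈ M := by
        have h2 := M.mul_mem (M.algebraMap_mem ((c - c')⁻¹)) hdiff
        have hcc0 : c - c' ≠ 0 := sub_ne_zero.mpr hne
        rwa [← mul_assoc, ← map_mul, inv_mul_cancel₀ hcc0, map_one, one_mul] at h2
      have hMtop : M = ⊤ := by
        have hle : K⟮α⟯ ≤ M := adjoin_le_iff.mpr (by simpa using hαM)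
        rw [htopα] at hle
        exact le_antisymm le_top hle
      refine ⟨α ^ 2 + algebraMap K L c * α, hMtop, ?_⟩
      intro hmem
      obtain ⟨a, b, hab⟩ := Submodule.mem_span_pair.mp hmem
      have hP : Polynomial.aeval α
          (Polynomial.C b * Polynomial.X ^ 2 + Polynomial.C (b * c - 1) * Polynomial.X
            + Polynomial.C a) = 0 := by
        simp only [Algebra.smul_def, map_one, mul_one] at hab
        simp only [map_add, map_mul, map_sub, map_one, Polynomial.aeval_X, Polynomial.aeval_C,
          map_pow]
        linear_combination hab
      have hP0 := aux_small_deg hd3 hminα (by compute_degree) hP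
      have hb : b = 0 := by
        have hcoeff := congrArg (fun q => Polynomial.coeff q 2) hP0
        have hcoeff' : (Polynomial.C b * Polynomial.X ^ 2 + Polynomial.C (b * c - 1) *
            Polynomial.X + Polynomial.C a).coeff 2 = (0 : Polynomial K).coeff 2 := by
          rw [hP0]
        simpa [Polynomial.coeff_add, Polynomial.coeff_C_mul, Polynomial.coeff_X_pow,
          Polynomial.coeff_X, Polynomial.coeff_one, Polynomial.coeff_C] using hcoeff'
      have hbc : b * c - 1 = 0 := by
        have hcoeff' : (Polynomial.C b * Polynomial.X ^ 2 + Polynomial.C (b * c - 1) *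
            Polynomial.X + Polynomial.C a).coeff 1 = (0 : Polynomial K).coeff 1 := by
          rw [hP0]
        simpa [Polynomial.coeff_add, Polynomial.coeff_C_mul, Polynomial.coeff_X_pow,
          Polynomial.coeff_X, Polynomial.coeff_one, Polynomial.coeff_C] using hcoeff'
      rw [hb, zero_mul] at hbc
      simp at hbc
    | inl hfin =>
      -- finite base field: counting argument
      haveI : Fintype K := Fintype.ofFinite K
      haveI : Finite L := Module.finite_of_finite K
      haveI : Fintype L := Fintype.ofFinite L
      set q := Fintype.card K with hqdef
      have hq2 : 2 ≤ q := Fintype.one_lt_card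
      have hcardL : Fintype.card L = q ^ d := by
        rw [Module.card_eq_pow_finrank (K := K) (V := L), hrank]
      have hfinspan : (↑(Submodule.span K ({1, α} : Set L)) : Set L).Finite := Set.toFinite _
      set S : Finset L := hfinspan.toFinset with hSdef
      have hScard : S.card ≤ q ^ 2 := by
        have hsurj : Set.SurjOn (fun ab : K × K => ab.1 • (1 : L) + ab.2 • α)
            (Finset.univ : Finset (K × K)) S := by
          intro x hx
          rw [Finset.mem_coe, hSdef, Set.Finite.mem_toFinset] at hx
          obtain ⟨a, b, hab⟩ := Submodule.mem_span_pair.mp hx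
          exact ⟨(a, b), by simp, hab⟩
        have hcard := Finset.card_le_card_of_surjOn _ hsurj
        simpa [Fintype.card_prod, sq] using hcard
      set P : Polynomial L :=
        (∏ p ∈ d.primeFactors, (Polynomial.X ^ q ^ (d / p) - Polynomial.X)) *
          ∏ v ∈ S, (Polynomial.X - Polynomial.C v) with hPdef
      have hmon : ∀ p ∈ d.primeFactors, (Polynomial.X ^ q ^ (d / p)
          - (Polynomial.X : Polynomial L)).Monic := by
        intro p hp
        obtain ⟨hpp, hpd, hd0⟩ := Nat.mem_primeFactors.mp hp
        apply Polynomial.monic_X_pow_sub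
        rw [Polynomial.degree_X]
        have h1 : 1 ≤ d / p := Nat.one_le_div_iff hpp.pos |>.mpr (Nat.le_of_dvd (by omega) hpd)
        have h2q : 1 < q ^ (d / p) :=
          lt_of_lt_of_le hq2 (Nat.le_self_pow (by omega) q)
        exact_mod_cast Nat.one_lt_cast.mpr h2q
      have hPmonic : P.Monic := by
        apply Polynomial.Monic.mul
        · exact Polynomial.monic_prod_of_monic _ _ hmon
        · exact Polynomial.monic_prod_of_monic _ _ fun v _ => Polynomial.monic_X_sub_C v
      have hPne : P ≠ 0 := hPmonic.ne_zero
      have hPdeg : P.natDegree ≤ (∑ p ∈ d.primeFactors, q ^ (d / p)) + S.card := by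
        calc P.natDegree ≤
            (∏ p ∈ d.primeFactors,
              (Polynomial.X ^ q ^ (d / p) - (Polynomial.X : Polynomial L))).natDegree +
            (∏ v ∈ S, (Polynomial.X - Polynomial.C v)).natDegree :=
              Polynomial.natDegree_mul_le
          _ ≤ (∑ p ∈ d.primeFactors, q ^ (d / p)) + S.card := by
              apply Nat.add_le_add
              · apply le_trans (Polynomial.natDegree_prod_le _ _)
                apply Finset.sum_le_sum
                intro p hp
                apply le_trans (Polynomial.natDegree_sub_le _ _)
                simp only [Polynomial.natDegree_X_pow, Polynomial.natDegree_X]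
                have : 1 ≤ q ^ (d / p) := Nat.one_le_pow _ _ (by omega)
                omega
              · apply le_trans (Polynomial.natDegree_prod_le _ _)
                apply le_of_eq
                rw [Finset.sum_congr rfl fun v _ => Polynomial.natDegree_X_sub_C v]
                simp [Finset.sum_const]
      -- key counting inequality
      have hsum : (∑ p ∈ d.primeFactors, q ^ (d / p)) + q ^ 2 < q ^ d := by
        have hsub : d.primeFactors.image (fun p => d / p) ⊆ Finset.Icc 1 (d / 2) := by
          intro e he
          obtain ⟨p, hp, rfl⟩ := Finset.mem_image.mp he
          obtain ⟨hpp, hpd, hd0⟩ := Nat.mem_primeFactors.mp hp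
          rw [Finset.mem_Icc]
          constructor
          · exact Nat.one_le_div_iff hpp.pos |>.mpr (Nat.le_of_dvd (by omega) hpd)
          · exact Nat.div_le_div_left hpp.two_le (by omega)
        have hinj : Set.InjOn (fun p => d / p) d.primeFactors := by
          intro p1 h1 p2 h2 hpe
          obtain ⟨hp1, hd1, _⟩ := Nat.mem_primeFactors.mp h1
          obtain ⟨hp2, hd2, _⟩ := Nat.mem_primeFactors.mp h2
          have e1 : d / (d / p1) = p1 := Nat.div_div_self hd1 (by omega)
          have e2 : d / (d / p2) = p2 := Nat.div_div_self hd2 (by omega)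
          rw [← e1, ← e2]
          simp only at hpe
          rw [hpe]
        have h1 : (∑ p ∈ d.primeFactors, q ^ (d / p)) =
            ∑ e ∈ d.primeFactors.image (fun p => d / p), q ^ e :=
          (Finset.sum_image (fun x hx y hy h => hinj hx hy h)).symm
        have h2 : (∑ e ∈ d.primeFactors.image (fun p => d / p), q ^ e) ≤
            ∑ e ∈ Finset.Icc 1 (d / 2), q ^ e :=
          Finset.sum_le_sum_of_subset hsub
        have h3 : (∑ e ∈ Finset.Icc 1 (d / 2), q ^ e) ≤
            ∑ e ∈ Finset.range (d / 2 + 1), q ^ e := by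
          apply Finset.sum_le_sum_of_subset
          intro e he
          rw [Finset.mem_Icc] at he
          rw [Finset.mem_range]
          omega
        have h4 := aux_geom hq2 (d / 2 + 1)
        have h5 : d / 2 + 1 ≤ d - 1 := by omega
        have h6 : q ^ (d / 2 + 1) ≤ q ^ (d - 1) := Nat.pow_le_pow_right (by omega) h5
        have h7 : q ^ 2 ≤ q ^ (d - 1) := Nat.pow_le_pow_right (by omega) (by omega)
        have h8 : q ^ (d - 1) * 2 ≤ q ^ (d - 1) * q := Nat.mul_le_mul_left _ hq2
        have h9 : q ^ (d - 1) * q = q ^ d := by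
          rw [← pow_succ]
          congr 1
          omega
        omega
      have hPlt : P.natDegree < Fintype.card L := by
        rw [hcardL]; omega
      obtain ⟨γ, hγev⟩ := Polynomial.exists_eval_ne_zero_of_natDegree_lt_card P hPne
        (by rw [Cardinal.mk_fintype]; exact_mod_cast hPlt)
      rw [hPdef, Polynomial.eval_mul, Polynomial.eval_prod, Polynomial.eval_prod] at hγev
      have hA : ∀ p ∈ d.primeFactors, γ ^ q ^ (d / p) - γ ≠ 0 := by
        intro p hp hzero
        apply hγev
        rw [mul_eq_zero]
        left
        rw [Finset.prod_eq_zero_iff]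
        exact ⟨p, hp, by simpa using hzero⟩
      have hB : γ ∉ Submodule.span K ({1, α} : Set L) := by
        intro hmem
        apply hγev
        rw [mul_eq_zero]
        right
        rw [Finset.prod_eq_zero_iff]
        refine ⟨γ, ?_, by simp⟩
        rw [hSdef, Set.Finite.mem_toFinset]
        exact hmem
      have hγtop : K⟮γ⟯ = ⊤ := by
        by_contra hne
        set M := K⟮γ⟯ with hMdef
        haveI : FiniteDimensional K M := inferInstance
        set e := Module.finrank K M with he
        have hmul : e * Module.finrank M L = d := by
          rw [he, Module.finrank_mul_finrank K M L, hrank]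
        have hdvd : e ∣ d := Dvd.intro _ hmul
        have he1 : 1 ≤ e := Module.finrank_pos
        have hed : e ≠ d := by
          intro hh
          apply hne
          apply IntermediateField.eq_of_le_of_finrank_eq le_top
          rw [IntermediateField.finrank_top', hrank, ← hh]
        have hde2 : 2 ≤ d / e := by
          have hh := Nat.div_mul_cancel hdvd
          rcases Nat.lt_or_ge (d / e) 2 with h | h
          · have hcase : d / e = 0 ∨ d / e = 1 :=
              Nat.le_one_iff_eq_zero_or_eq_one.mp (Nat.lt_succ_iff.mp h)
            rcases hcase with h0 | h1
            · rw [h0, zero_mul] at hh; omega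
            · rw [h1, one_mul] at hh; omega
          · exact h
        set pr := (d / e).minFac with hprdef
        have hprp : pr.Prime := Nat.minFac_prime (by omega)
        have hprdvd : pr ∣ d / e := Nat.minFac_dvd _
        have hprd : pr ∣ d := hprdvd.trans (Nat.div_dvd_of_dvd hdvd)
        have hprmem : pr ∈ d.primeFactors := Nat.mem_primeFactors.mpr ⟨hprp, hprd, by omega⟩
        obtain ⟨m, hm⟩ := hprdvd
        have hdpr : d / pr = e * m := by
          have hd' : d = e * (d / e) := (Nat.mul_div_cancel' hdvd).symm
          rw [hm] at hd'
          rw [hd', show e * (pr * m) = pr * (e * m) by ring]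
          exact Nat.mul_div_cancel_left _ hprp.pos
        have hγM : γ ∈ M := IntermediateField.mem_adjoin_simple_self K γ
        haveI : Fintype M := Fintype.ofFinite M
        have hcardM : Fintype.card M = q ^ e := Module.card_eq_pow_finrank (K := K) (V := M)
        have hpow : (⟨γ, hγM⟩ : M) ^ q ^ e = ⟨γ, hγM⟩ := by
          rw [← hcardM]; exact FiniteField.pow_card _
        have hpowL : γ ^ q ^ e = γ := by
          have := congrArg Subtype.val hpow
          simpa using this
        have hiter : ∀ k, γ ^ q ^ (e * k) = γ := by
          intro k
          induction k with
          | zero => simp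
          | succ k ih =>
            rw [Nat.mul_succ, pow_add, pow_mul, ih]
            exact hpowL
        have hfin := hiter m
        rw [← hdpr] at hfin
        exact hA pr hprmem (by rw [hfin, sub_self])
      refine ⟨γ, hγtop, ?_⟩
      intro hmem
      obtain ⟨a, b, hab⟩ := Submodule.mem_span_pair.mp hmem
      by_cases hb : b = 0
      · rw [hb, zero_smul, add_zero, Algebra.smul_def, mul_one] at hab
        have haev : Polynomial.aeval α (Polynomial.X - Polynomial.C a) = 0 := by
          rw [map_sub, Polynomial.aeval_X, Polynomial.aeval_C, ← hab, sub_self]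
        have h0 := aux_small_deg hd3 hminα
          (by rw [Polynomial.natDegree_X_sub_C]; omega) haev
        exact Polynomial.X_sub_C_ne_zero a h0
      · apply hB
        rw [Submodule.mem_span_pair]
        refine ⟨-(b⁻¹ * a), b⁻¹, ?_⟩
        have hbL : algebraMap K L b ≠ 0 := by
          simpa using hb
        simp only [Algebra.smul_def, map_neg, map_mul, map_inv₀, mul_one] at hab ⊢
        rw [← hab]
        linear_combination γ * inv_mul_cancel₀ hbL
  exact aux_construct hd3 hrank hd hα hγtop hspan
end

section
/- Let K be a field and f ∈ K[X] monic irreducible of degree d ≥ 3. Define g(X) = X^d·f(1/X) (the reciprocal polynomial) and h(X) = (1 − g(X))/X. Then h is a polynomial in K[X] and g(X) divides f(h(X)) in K[X]. -/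
/-! In `K[X] ⧸ (g)` the relation `X * h = 1 - g` makes `h` the inverse of `X`, so there
`f(h) = f(X⁻¹) = X⁻ᵈ · g(X) = 0`. -/

open Polynomial

namespace Polynomial

variable {R : Type*} [CommRing R]

theorem X_dvd_one_sub_reverse {f : R[X]} (hf : f.Monic) : X ∣ 1 - f.reverse := by
  rw [X_dvd_iff, coeff_sub, coeff_zero_reverse, hf.leadingCoeff, coeff_one_zero, sub_self]

theorem reverse_dvd_comp_of_dvd_X_mul_sub_one (f h : R[X]) (hh : f.reverse ∣ X * h - 1) :
    f.reverse ∣ f.comp h := by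
  set π := Ideal.Quotient.mkₐ R (Ideal.span {f.reverse})
  have hπ : ∀ p : R[X], π p = 0 ↔ f.reverse ∣ p := fun p => Ideal.Quotient.eq_zero_iff_dvd _ _
  have hinv : π X * π h = 1 := by
    rw [← map_mul, ← sub_eq_zero, ← map_one π, ← map_sub, hπ]
    exact hh
  let _ : Invertible (π h) := invertibleOfLeftInverse _ _ hinv
  have hX : ⅟(π h) = π X := invOf_eq_left_inv hinv
  have hrev : aeval (π X) f.reverse = 0 := by
    rw [aeval_algHom_apply, aeval_X_left_apply, hπ]
  rw [← hπ, comp_eq_aeval, ← aeval_algHom_apply, aeval_def,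
    ← eval₂_reverse_eq_zero_iff, hX, ← aeval_def, hrev]

end Polynomial

theorem stmt5_general (K : Type*) [Field K] (f : Polynomial K)
    (hmonic : f.Monic)
    (g : Polynomial K) (hg : g = f.reverse) :
    ∃ h : Polynomial K, Polynomial.X * h = 1 - g ∧ g ∣ f.comp h := by
  subst hg
  obtain ⟨h, hh⟩ := X_dvd_one_sub_reverse hmonic
  refine ⟨h, hh.symm, reverse_dvd_comp_of_dvd_X_mul_sub_one f h ?_⟩
  rw [← hh, sub_sub_cancel_left, dvd_neg]

theorem stmt5 (K : Type*) [Field K] (f : Polynomial K) (d : ℕ)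
    (hf : Irreducible f) (hmonic : f.Monic) (hd : f.natDegree = d) (hd3 : 3 ≤ d)
    (g : Polynomial K) (hg : g = f.reverse) :
    ∃ h : Polynomial K, Polynomial.X * h = 1 - g ∧ g ∣ f.comp h :=
  stmt5_general K f hmonic g hg
end
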